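/- Let G be a finitely generated group and H a finite index subgroup of G. Then there exists a finite index subgroup H' of H such that φ(H') = H' for every automorphism φ of G. -/
import Mathlib

/-- Conjugation of permutations by an equiv, as a monoid hom. -/
private def permCongrHom {α β : Type*} (e : α ≃ β) :
    Equiv.Perm α →* Equiv.Perm β :=
  MonoidHom.mk' (fun p => (e.symm.trans p).trans e) (by
    intro p q
    ext x
    simp [Equiv.Perm.mul_apply])

private lemma finite_homs {G P : Type*} [Group G] [Group.FG G] [Monoid P] [Finite P] :
    Finite (G →* P) := by
  obtain ⟨S, hS, hSfin⟩ := Group.fg_iff.mp (inferInstance : Group.FG G)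
  have : Finite S := hSfin
  refine Finite.of_injective (fun f => fun s : S => f s) ?_
  intro f g h
  refine MonoidHom.eq_of_eqOn_dense hS ?_
  intro x hx
  exact congrFun h ⟨x, hx⟩

private lemma finite_index_set {G : Type*} [Group G] [Group.FG G] {n : ℕ} (hn : n ≠ 0) :
    {K : Subgroup G | K.index = n}.Finite := by
  have hfin : ∀ K : {K : Subgroup G | K.index = n}, Nonempty (G ⧸ (K : Subgroup G) ≃ Fin n) := by
    rintro ⟨K, hK⟩
    have : K.FiniteIndex := ⟨hK ▸ hn⟩
    have : Fintype (G ⧸ K) := Fintype.ofFinite _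
    exact ⟨Fintype.equivFinOfCardEq (by rw [← Nat.card_eq_fintype_card]; exact hK)⟩
  have e : ∀ K : {K : Subgroup G | K.index = n}, G ⧸ (K : Subgroup G) ≃ Fin n :=
    fun K => (hfin K).some
  rw [← Set.finite_coe_iff]
  have : Finite (G →* Equiv.Perm (Fin n)) := finite_homs
  refine Finite.of_injective
    (fun K => ((permCongrHom (e K)).comp (MulAction.toPermHom G (G ⧸ (K : Subgroup G))),
      e K ((1 : G) : G ⧸ (K : Subgroup G)))) ?_
  rintro ⟨K₁, hK₁⟩ ⟨K₂, hK₂⟩ h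
  rw [Prod.mk.injEq] at h
  obtain ⟨h1, h2⟩ := h
  have e1 : ∀ (K : {K : Subgroup G | K.index = n}) (g : G),
      (g ∈ (K : Subgroup G)) ↔
        e K (g • ((1 : G) : G ⧸ (K : Subgroup G))) = e K ((1 : G) : G ⧸ (K : Subgroup G)) := by
    intro K g
    rw [(e K).apply_eq_iff_eq]
    constructor
    · intro hg
      have : g ∈ MulAction.stabilizer G ((1 : G) : G ⧸ (K : Subgroup G)) := by
        rwa [MulAction.stabilizer_quotient]
      exact this
    · intro hg
      have : g ∈ MulAction.stabilizer G ((1 : G) : G ⧸ (K : Subgroup G)) := hg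
      rwa [MulAction.stabilizer_quotient] at this
  have key : ∀ g : G, g ∈ K₁ ↔ g ∈ K₂ := by
    intro g
    rw [e1 ⟨K₁, hK₁⟩ g, e1 ⟨K₂, hK₂⟩ g]
    have hfun := congrFun (congrArg (fun f => ((f g : Equiv.Perm (Fin n)) : Fin n → Fin n)) h1)
    have h1' := hfun (e ⟨K₁, hK₁⟩ ((1 : G) : G ⧸ K₁))
    simp only [permCongrHom, MonoidHom.comp_apply, MonoidHom.mk'_apply,
      Equiv.trans_apply, Equiv.symm_apply_apply, MulAction.toPermHom_apply,
      MulAction.toPerm_apply] at h1'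
    rw [h2] at h1'
    simp only [Equiv.symm_apply_apply] at h1'
    rw [h1', h2]
  exact Subtype.ext (SetLike.ext key)

/-- Let `G` be a finitely generated group and `H` a finite index subgroup
of `G`. Then there exists a finite index subgroup `H'` of `H` such that `φ(H') = H'` for
every automorphism `φ` of `G`. -/
theorem stmt0 {G : Type*} [Group G] [Group.FG G] (H : Subgroup G) [H.FiniteIndex] :
    ∃ H' : Subgroup G, H' ≤ H ∧ H'.FiniteIndex ∧
      ∀ φ : G ≃* G, H'.map φ.toMonoidHom = H' := by
  set n := H.index with hn
  have hn0 : n ≠ 0 := Subgroup.FiniteIndex.index_ne_zero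
  set S : Set (Subgroup G) := {K : Subgroup G | K.index = n} with hS
  have hSfin : S.Finite := finite_index_set hn0
  have : Finite S := hSfin
  refine ⟨⨅ K : S, (K : Subgroup G), ?_, ?_, ?_⟩
  · exact iInf_le_of_le ⟨H, rfl⟩ le_rfl
  · exact Subgroup.finiteIndex_iInf fun K => ⟨K.2 ▸ hn0⟩
  · intro φ
    have hcomap : ∀ ψ : G ≃* G, (⨅ K : S, (K : Subgroup G)).comap ψ.toMonoidHom
        = ⨅ K : S, (K : Subgroup G) := by
      intro ψ
      rw [Subgroup.comap_iInf]
      apply le_antisymm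
      · refine le_iInf fun ⟨K, hK⟩ => ?_
        have hker : ψ.toMonoidHom.ker ≤ K := by
          rw [ψ.toMonoidHom.ker_eq_bot_iff.mpr ψ.injective]
          exact bot_le
        have hmem : K.map ψ.toMonoidHom ∈ S := by
          show (K.map ψ.toMonoidHom).index = n
          rw [Subgroup.index_map_eq K (f := ψ.toMonoidHom) ψ.surjective hker]
          exact hK
        refine iInf_le_of_le ⟨K.map ψ.toMonoidHom, hmem⟩ ?_
        rw [Subgroup.comap_map_eq_self_of_injective ψ.injective]
      · refine le_iInf fun ⟨K, hK⟩ => ?_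
        have hmem : K.comap ψ.toMonoidHom ∈ S := by
          show (K.comap ψ.toMonoidHom).index = n
          rw [K.index_comap_of_surjective ψ.surjective]
          exact hK
        exact iInf_le_of_le ⟨K.comap ψ.toMonoidHom, hmem⟩ le_rfl
    rw [Subgroup.map_equiv_eq_comap_symm']
    exact hcomap φ.symm
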